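/- Let f_w be an l-layer GCN (l ≥ 2) with nonzero weight matrices W_1,…,W_l, let ΔW_1,…,ΔW_l be perturbation matrices of matching sizes with ‖ΔW_i‖₂ ≤ ‖W_i‖₂ / l for all i ∈ [l], and let ε > 0. Then for any graph G = (X, A) on n nodes with ‖X‖₂ ≤ B and any pair of classes i, j ∈ [K]: |RM(f_{w+Δw}(G); i, j) − RM(f_w(G); i, j)| ≤ 2e · (B+ε) · (∏_{i=1}^l ‖W_i‖₂) · Σ_{i=1}^l (‖ΔW_i‖₂ / ‖W_i‖₂). -/

import Mathlib

open MeasureTheory Matrix Finset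

noncomputable section

/-- Spectral norm of a real matrix: the operator norm induced by Euclidean vector norms. -/
def specNorm {m n : Type*} [Fintype m] [Fintype n] [DecidableEq n] (A : Matrix m n ℝ) : ℝ :=
  ‖LinearMap.toContinuousLinearMap (Matrix.toEuclideanLin A)‖

/-- Frobenius norm of a real matrix. -/
def frobNorm {m n : Type*} [Fintype m] [Fintype n] (A : Matrix m n ℝ) : ℝ :=
  Real.sqrt (∑ i, ∑ j, (A i j) ^ 2)

/-- Euclidean norm of a finite real vector. -/
def euclNorm {n : Type*} [Fintype n] (v : n → ℝ) : ℝ :=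
  Real.sqrt (∑ i, (v i) ^ 2)

/-- Entrywise ReLU on a matrix. -/
def relu {m k : Type*} (M : Matrix m k ℝ) : Matrix m k ℝ := M.map (fun x => max x 0)

/-- Node representations of a GCN: `H_0 = X`, `H_{k+1} = σ(P H_k W_{k+1})`
(we index weights from `0`, so `W k` is the paper's `W_{k+1}`). -/
def gcnRep {n : ℕ} (d : ℕ → ℕ) (W : ∀ k : ℕ, Matrix (Fin (d k)) (Fin (d (k + 1))) ℝ)
    (P : Matrix (Fin n) (Fin n) ℝ) (X : Matrix (Fin n) (Fin (d 0)) ℝ) :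
    (k : ℕ) → Matrix (Fin n) (Fin (d k)) ℝ
  | 0 => X
  | (k + 1) => relu (P * gcnRep d W P X k * W k)

/-- Output (readout) of an `l`-layer GCN: `f_w(G) = H_l = (1/n) 1_n H_{l-1} W_l`. -/
def gcnOut {n : ℕ} (d : ℕ → ℕ) (W : ∀ k : ℕ, Matrix (Fin (d k)) (Fin (d (k + 1))) ℝ)
    (P : Matrix (Fin n) (Fin n) ℝ) (X : Matrix (Fin n) (Fin (d 0)) ℝ) :
    (l : ℕ) → Fin (d l) → ℝ
  | 0 => fun _ => 0
  | (l + 1) => fun j => (n : ℝ)⁻¹ * ∑ i, (gcnRep d W P X l * W l) i j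

/-- Normalized graph Laplacian `P_G = D̃^{-1/2} Ã D̃^{-1/2}` with `Ã = A + I` and
`D̃ = diag(∑_j Ã_{ij})`, written entrywise. -/
def gcnLap {n : ℕ} (A : Matrix (Fin n) (Fin n) ℝ) : Matrix (Fin n) (Fin n) ℝ :=
  Matrix.of fun i j =>
    (A + 1) i j / (Real.sqrt (∑ k, (A + 1) i k) * Real.sqrt (∑ k, (A + 1) j k))

/-- The `ε`-attack set of a graph `G = (X, A)`: the node features may be moved by at most
`ε` in spectral norm, and the adjacency matrix may be replaced by any symmetric 0/1
matrix. -/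
def attack {n h₀ : ℕ} (ε : ℝ) (G : Matrix (Fin n) (Fin h₀) ℝ × Matrix (Fin n) (Fin n) ℝ) :
    Set (Matrix (Fin n) (Fin h₀) ℝ × Matrix (Fin n) (Fin n) ℝ) :=
  {G' | specNorm (G'.1 - G.1) ≤ ε ∧ G'.2.IsSymm ∧ ∀ i j, G'.2 i j = 0 ∨ G'.2 i j = 1}

/-- The robust margin operator of a pair of classes `(i, j)` for a GCN under `ε`-attacks:
`RM(f_w(G); i, j) = inf_{G' ∈ δ(G)} (f_w(G')_i - f_w(G')_j)`. -/
noncomputable def gcnRobustMarginPair {n : ℕ} (l : ℕ) (d : ℕ → ℕ)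
    (W : ∀ k : ℕ, Matrix (Fin (d k)) (Fin (d (k + 1))) ℝ) (ε : ℝ)
    (G : Matrix (Fin n) (Fin (d 0)) ℝ × Matrix (Fin n) (Fin n) ℝ) (i j : Fin (d l)) : ℝ :=
  sInf {x | ∃ G' ∈ attack ε G,
    gcnOut d W (gcnLap G'.2) G'.1 l i - gcnOut d W (gcnLap G'.2) G'.1 l j = x}

/-!
The ReLU is 1-Lipschitz entrywise, hence in Frobenius norm, and the normalized adjacency `P_G`
of every graph in the attack set has spectral norm at most `1`, so in Frobenius norm each layer
`H ↦ σ(P_G H W)` is `‖W‖₂`-Lipschitz and `‖H_k‖_F ≤ √n ‖X'‖₂ ∏_{i<k} ‖W_i‖₂`. Perturbing the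
weights, the errors `e_k = ‖H'_k - H_k‖_F` satisfy `e_{k+1} ≤ e_k (‖W_k‖ + ‖ΔW_k‖) + ‖H_k‖_F ‖ΔW_k‖`,
which telescopes to `e_k ≤ √n ‖X'‖₂ (∏ (‖W_i‖ + ‖ΔW_i‖) - ∏ ‖W_i‖)`; the mean readout costs a
factor `1/√n`. With `r_i = ‖ΔW_i‖ / ‖W_i‖ ≤ 1/l` we get `∏ (1 + r_i) - 1 ≤ exp (∑ r_i) - 1 ≤ e ∑ r_i`.
This bounds each margin `f(G')_i - f(G')_j` uniformly over the attack set, and infima of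
uniformly close functions are close.
-/

open scoped Matrix.Norms.L2Operator

lemma specNorm_eq_norm {m n : Type*} [Fintype m] [Fintype n] [DecidableEq n] (A : Matrix m n ℝ) :
    specNorm A = ‖A‖ := rfl

section Frobenius

variable {m n p : Type*} [Fintype m] [Fintype n] [Fintype p]

lemma l2_opNorm_transpose [DecidableEq m] [DecidableEq n] (A : Matrix m n ℝ) : ‖Aᵀ‖ = ‖A‖ := by
  rw [← conjTranspose_eq_transpose_of_trivial, l2_opNorm_conjTranspose]

lemma frobNorm_nonneg (M : Matrix m n ℝ) : 0 ≤ frobNorm M := Real.sqrt_nonneg _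

lemma frobNorm_sq (M : Matrix m n ℝ) : frobNorm M ^ 2 = ∑ i, ∑ j, M i j ^ 2 :=
  Real.sq_sqrt (by positivity)

lemma frobNorm_eq_norm (M : Matrix m n ℝ) :
    frobNorm M = ‖(WithLp.toLp 2 fun q : m × n => M q.1 q.2 : EuclideanSpace ℝ (m × n))‖ := by
  rw [EuclideanSpace.norm_eq, frobNorm, ← Finset.univ_product_univ, Finset.sum_product]
  simp

lemma frobNorm_sq_eq_sum_norm_row_sq (M : Matrix m n ℝ) :
    frobNorm M ^ 2 = ∑ i, ‖(WithLp.toLp 2 (M i) : EuclideanSpace ℝ n)‖ ^ 2 := by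
  rw [frobNorm_sq]
  simp [EuclideanSpace.norm_sq_eq]

lemma frobNorm_transpose (M : Matrix m n ℝ) : frobNorm Mᵀ = frobNorm M := by
  rw [frobNorm, frobNorm, Finset.sum_comm]
  rfl

lemma frobNorm_add_le (M N : Matrix m n ℝ) : frobNorm (M + N) ≤ frobNorm M + frobNorm N := by
  simp only [frobNorm_eq_norm]
  exact (congrArg norm (WithLp.toLp_add 2 _ _)).trans_le (norm_add_le _ _)

lemma frobNorm_le_of_abs_le {M N : Matrix m n ℝ} (h : ∀ i j, |M i j| ≤ |N i j|) :
    frobNorm M ≤ frobNorm N :=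
  Real.sqrt_le_sqrt <| Finset.sum_le_sum fun i _ => Finset.sum_le_sum fun j _ =>
    sq_le_sq.mpr (h i j)

lemma frobNorm_relu_sub_le (M N : Matrix m n ℝ) :
    frobNorm (relu M - relu N) ≤ frobNorm (M - N) :=
  frobNorm_le_of_abs_le fun i j => abs_max_sub_max_le_abs (M i j) (N i j) 0

lemma frobNorm_relu_le (M : Matrix m n ℝ) : frobNorm (relu M) ≤ frobNorm M := by
  simpa [relu] using frobNorm_relu_sub_le M 0

lemma frobNorm_mul_le_frobNorm_mul_norm [DecidableEq n] [DecidableEq p] (M : Matrix m n ℝ)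
    (W : Matrix n p ℝ) : frobNorm (M * W) ≤ frobNorm M * ‖W‖ := by
  have hrow : ∀ i, ‖(WithLp.toLp 2 ((M * W) i) : EuclideanSpace ℝ p)‖
      ≤ ‖(WithLp.toLp 2 (M i) : EuclideanSpace ℝ n)‖ * ‖W‖ := fun i => by
    have h := Wᵀ.l2_opNorm_mulVec (WithLp.toLp 2 (M i))
    rwa [l2_opNorm_transpose, mulVec_transpose, mul_comm] at h
  refine (pow_le_pow_iff_left₀ (frobNorm_nonneg _)
    (mul_nonneg (frobNorm_nonneg _) (norm_nonneg _)) two_ne_zero).mp ?_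
  rw [mul_pow, frobNorm_sq_eq_sum_norm_row_sq, frobNorm_sq_eq_sum_norm_row_sq, Finset.sum_mul]
  exact Finset.sum_le_sum fun i _ => by
    rw [← mul_pow]
    exact pow_le_pow_left₀ (norm_nonneg _) (hrow i) 2

lemma frobNorm_mul_le_norm_mul_frobNorm [DecidableEq m] [DecidableEq n] [DecidableEq p]
    (A : Matrix p m ℝ) (M : Matrix m n ℝ) : frobNorm (A * M) ≤ ‖A‖ * frobNorm M := by
  rw [← frobNorm_transpose, transpose_mul, ← frobNorm_transpose M, ← l2_opNorm_transpose A,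
    mul_comm]
  exact frobNorm_mul_le_frobNorm_mul_norm _ _

lemma frobNorm_mul_le_of_norm_le_one [DecidableEq m] [DecidableEq n] [DecidableEq p]
    {A : Matrix p m ℝ} (hA : ‖A‖ ≤ 1) (M : Matrix m n ℝ) : frobNorm (A * M) ≤ frobNorm M :=
  (frobNorm_mul_le_norm_mul_frobNorm A M).trans (mul_le_of_le_one_left (frobNorm_nonneg M) hA)

lemma frobNorm_le_sqrt_card_mul_norm [DecidableEq m] [DecidableEq n] (M : Matrix m n ℝ) :
    frobNorm M ≤ √(Fintype.card m) * ‖M‖ := by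
  have h1 : frobNorm (1 : Matrix m m ℝ) = √(Fintype.card m) := by
    simp [frobNorm, Matrix.one_apply]
  simpa [h1] using frobNorm_mul_le_frobNorm_mul_norm (1 : Matrix m m ℝ) M

lemma frobNorm_mul_add_sub_mul_le [DecidableEq n] [DecidableEq p] (H' H : Matrix m n ℝ)
    (W ΔW : Matrix n p ℝ) :
    frobNorm (H' * (W + ΔW) - H * W)
      ≤ frobNorm (H' - H) * (‖W‖ + ‖ΔW‖) + frobNorm H * ‖ΔW‖ := by
  have hsplit : H' * (W + ΔW) - H * W = (H' - H) * (W + ΔW) + H * ΔW := by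
    rw [Matrix.sub_mul, Matrix.mul_add, Matrix.mul_add]
    abel
  rw [hsplit]
  calc frobNorm ((H' - H) * (W + ΔW) + H * ΔW)
      ≤ frobNorm (H' - H) * ‖W + ΔW‖ + frobNorm H * ‖ΔW‖ :=
        (frobNorm_add_le _ _).trans (add_le_add (frobNorm_mul_le_frobNorm_mul_norm _ _)
          (frobNorm_mul_le_frobNorm_mul_norm _ _))
    _ ≤ frobNorm (H' - H) * (‖W‖ + ‖ΔW‖) + frobNorm H * ‖ΔW‖ := by
        gcongr
        · exact frobNorm_nonneg _
        · exact norm_add_le _ _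

end Frobenius

lemma abs_inv_mul_sum_le_of_frobNorm_le {n : ℕ} {κ : Type*} [Fintype κ] (hn : 0 < n)
    {D : Matrix (Fin n) κ ℝ} {K : ℝ} (hD : frobNorm D ≤ √n * K) (j : κ) :
    |(n : ℝ)⁻¹ * ∑ i, D i j| ≤ K := by
  have hcol : |∑ i, D i j| ≤ √n * frobNorm D := by
    rw [← Real.sqrt_sq (frobNorm_nonneg D), ← Real.sqrt_mul (Nat.cast_nonneg n), frobNorm_sq]
    refine Real.abs_le_sqrt ((sq_sum_le_card_mul_sum_sq ..).trans ?_)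
    simp only [Finset.card_univ, Fintype.card_fin]
    gcongr with i
    exact Finset.single_le_sum (fun k _ => sq_nonneg (D i k)) (Finset.mem_univ j)
  rw [abs_mul, abs_inv, Nat.abs_cast]
  calc (n : ℝ)⁻¹ * |∑ i, D i j| ≤ (n : ℝ)⁻¹ * (√n * (√n * K)) := by
        gcongr
        exact hcol.trans (by gcongr)
    _ = K := by
        rw [← mul_assoc (√n), Real.mul_self_sqrt (Nat.cast_nonneg n),
          inv_mul_cancel_left₀ (Nat.cast_ne_zero.mpr hn.ne')]

section Normalize

variable {ι : Type*} [Fintype ι]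

def symmNormalize (a : Matrix ι ι ℝ) : Matrix ι ι ℝ :=
  Matrix.of fun i j => a i j / (√(∑ k, a i k) * √(∑ k, a j k))

lemma gcnLap_eq_symmNormalize {n : ℕ} (A : Matrix (Fin n) (Fin n) ℝ) :
    gcnLap A = symmNormalize (A + 1) := rfl

variable {a : Matrix ι ι ℝ}

lemma sum_sq_symmNormalize_mulVec_le (ha : a.IsSymm) (ha0 : ∀ i j, 0 ≤ a i j)
    (hd : ∀ i, 0 < ∑ j, a i j) (v : ι → ℝ) :
    ∑ i, (symmNormalize a *ᵥ v) i ^ 2 ≤ ∑ i, v i ^ 2 := by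
  set d : ι → ℝ := fun i => ∑ j, a i j
  set y : ι → ℝ := fun j => v j / √(d j)
  have hrow : ∀ i, (symmNormalize a *ᵥ v) i ^ 2 ≤ ∑ j, a i j * y j ^ 2 := by
    intro i
    have hentry : (symmNormalize a *ᵥ v) i = (∑ j, a i j * y j) / √(d i) := by
      simp only [symmNormalize, mulVec, dotProduct, of_apply, Finset.sum_div]
      exact Finset.sum_congr rfl fun j _ => by ring
    -- Cauchy–Schwarz with weights `a i j`, whose total is `d i`
    have hcs : (∑ j, a i j * y j) ^ 2 ≤ d i * ∑ j, a i j * y j ^ 2 :=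
      Finset.sum_sq_le_sum_mul_sum_of_sq_le_mul _ (fun j _ => ha0 i j)
        (fun j _ => mul_nonneg (ha0 i j) (sq_nonneg _)) fun j _ => le_of_eq (by ring)
    rw [hentry, div_pow, Real.sq_sqrt (hd i).le, div_le_iff₀ (hd i), mul_comm]
    exact hcs
  calc ∑ i, (symmNormalize a *ᵥ v) i ^ 2 ≤ ∑ i, ∑ j, a i j * y j ^ 2 :=
        Finset.sum_le_sum fun i _ => hrow i
    _ = ∑ j, d j * y j ^ 2 := by
        rw [Finset.sum_comm]
        refine Finset.sum_congr rfl fun j _ => ?_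
        rw [← Finset.sum_mul]
        congr 1
        exact Finset.sum_congr rfl fun i _ => ha.apply j i
    _ = ∑ j, v j ^ 2 := Finset.sum_congr rfl fun j _ => by
        rw [div_pow, Real.sq_sqrt (hd j).le, mul_div_cancel₀ _ (hd j).ne']

lemma norm_symmNormalize_le_one [DecidableEq ι] (ha : a.IsSymm) (ha0 : ∀ i j, 0 ≤ a i j)
    (hd : ∀ i, 0 < ∑ j, a i j) : ‖symmNormalize a‖ ≤ 1 := by
  rw [l2_opNorm_def]
  refine ContinuousLinearMap.opNorm_le_bound _ zero_le_one fun x => ?_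
  rw [one_mul, EuclideanSpace.norm_eq, EuclideanSpace.norm_eq]
  simpa using Real.sqrt_le_sqrt (sum_sq_symmNormalize_mulVec_le ha ha0 hd x)

end Normalize

lemma norm_gcnLap_le_one {n : ℕ} {A : Matrix (Fin n) (Fin n) ℝ} (hA : A.IsSymm)
    (hA0 : ∀ i j, 0 ≤ A i j) : ‖gcnLap A‖ ≤ 1 := by
  have hA1 : ∀ i j, 0 ≤ (A + 1) i j := fun i j => by
    rw [Matrix.add_apply, one_apply]
    split_ifs <;> linarith [hA0 i j]
  rw [gcnLap_eq_symmNormalize]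
  refine norm_symmNormalize_le_one (hA.add isSymm_one) hA1 fun i => ?_
  calc (0 : ℝ) < (A + 1) i i := by simp only [Matrix.add_apply, one_apply_eq]; linarith [hA0 i i]
    _ ≤ ∑ j, (A + 1) i j := Finset.single_le_sum (fun j _ => hA1 i j) (Finset.mem_univ i)

lemma exp_sub_one_le_exp_one_mul {x : ℝ} (hx0 : 0 ≤ x) (hx1 : x ≤ 1) :
    Real.exp x - 1 ≤ Real.exp 1 * x := by
  have h1 : (1 - x) * Real.exp x ≤ 1 := by
    have h := Real.add_one_le_exp (-x)
    rw [Real.exp_neg] at h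
    calc (1 - x) * Real.exp x ≤ (Real.exp x)⁻¹ * Real.exp x := by gcongr; linarith
      _ = 1 := inv_mul_cancel₀ (Real.exp_pos x).ne'
  have h2 : Real.exp x ≤ Real.exp 1 := Real.exp_le_exp.mpr hx1
  nlinarith

lemma prod_one_add_sub_one_le_exp_one_mul_sum {ι : Type*} (s : Finset ι) {r : ι → ℝ}
    (hr : ∀ i, 0 ≤ r i) (hs : ∑ i ∈ s, r i ≤ 1) :
    ∏ i ∈ s, (1 + r i) - 1 ≤ Real.exp 1 * ∑ i ∈ s, r i :=
  calc ∏ i ∈ s, (1 + r i) - 1 ≤ Real.exp (∑ i ∈ s, r i) - 1 := by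
        gcongr
        exact Real.prod_one_add_le_exp_sum s hr
    _ ≤ Real.exp 1 * ∑ i ∈ s, r i :=
        exp_sub_one_le_exp_one_mul (Finset.sum_nonneg fun i _ => hr i) hs

lemma prod_add_sub_prod_le (l : ℕ) {w δ : ℕ → ℝ} (hw : ∀ i, 0 ≤ w i) (hδ0 : ∀ i, 0 ≤ δ i)
    (hδ : ∀ i < l, δ i ≤ w i / l) :
    ∏ i ∈ range l, (w i + δ i) - ∏ i ∈ range l, w i
      ≤ Real.exp 1 * (∏ i ∈ range l, w i) * ∑ i ∈ range l, δ i / w i := by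
  -- `δ i = 0` wherever `w i = 0`, so `w i + δ i = w i * (1 + δ i / w i)` despite `x / 0 = 0`
  have hfactor : ∀ i < l, w i + δ i = w i * (1 + δ i / w i) := fun i hi => by
    rcases (hw i).eq_or_lt with h | h
    · have : δ i ≤ 0 := by simpa [← h] using hδ i hi
      simp [← h, le_antisymm this (hδ0 i)]
    · field_simp
  have hratio : ∀ i < l, δ i / w i ≤ 1 / l := fun i hi => by
    rcases (hw i).eq_or_lt with h | h
    · simp [← h]
    · rw [div_le_iff₀ h, one_div_mul_eq_div]
      exact hδ i hi
  have hsum : ∑ i ∈ range l, δ i / w i ≤ 1 :=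
    calc ∑ i ∈ range l, δ i / w i ≤ ∑ _i ∈ range l, (1 / l : ℝ) :=
          Finset.sum_le_sum fun i hi => hratio i (Finset.mem_range.mp hi)
      _ ≤ 1 := by
          rw [Finset.sum_const, Finset.card_range, nsmul_eq_mul, mul_one_div]
          exact div_self_le_one _
  have hprod : ∏ i ∈ range l, (w i + δ i)
      = (∏ i ∈ range l, w i) * ∏ i ∈ range l, (1 + δ i / w i) := by
    rw [← Finset.prod_mul_distrib]
    exact Finset.prod_congr rfl fun i hi => hfactor i (Finset.mem_range.mp hi)
  rw [hprod, mul_assoc, ← mul_sub_one, mul_left_comm]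
  exact mul_le_mul_of_nonneg_left
    (prod_one_add_sub_one_le_exp_one_mul_sum _ (fun i => div_nonneg (hδ0 i) (hw i)) hsum)
    (Finset.prod_nonneg fun i _ => hw i)

section GCN

variable {n : ℕ} {d : ℕ → ℕ} {P : Matrix (Fin n) (Fin n) ℝ} {X : Matrix (Fin n) (Fin (d 0)) ℝ}
  {c : ℝ} (W ΔW : ∀ k, Matrix (Fin (d k)) (Fin (d (k + 1))) ℝ)

lemma frobNorm_gcnRep_le (hP : ‖P‖ ≤ 1) (hX : ‖X‖ ≤ c) (k : ℕ) :
    frobNorm (gcnRep d W P X k) ≤ √n * c * ∏ i ∈ range k, ‖W i‖ := by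
  induction k with
  | zero =>
    rw [range_zero, prod_empty, mul_one]
    calc frobNorm (gcnRep d W P X 0) ≤ √(Fintype.card (Fin n)) * ‖X‖ :=
          frobNorm_le_sqrt_card_mul_norm X
      _ ≤ √n * c := by rw [Fintype.card_fin]; gcongr
  | succ k ih =>
    calc frobNorm (gcnRep d W P X (k + 1)) ≤ frobNorm (P * gcnRep d W P X k * W k) :=
          frobNorm_relu_le _
      _ ≤ frobNorm (gcnRep d W P X k) * ‖W k‖ := by
          rw [Matrix.mul_assoc]
          exact (frobNorm_mul_le_of_norm_le_one hP _).trans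
            (frobNorm_mul_le_frobNorm_mul_norm _ _)
      _ ≤ √n * c * ∏ i ∈ range (k + 1), ‖W i‖ := by
          rw [prod_range_succ, ← mul_assoc]
          gcongr

lemma frobNorm_gcnRep_mul_sub_le (hP : ‖P‖ ≤ 1) (hX : ‖X‖ ≤ c) (k : ℕ)
    (hk : frobNorm (gcnRep d (fun i => W i + ΔW i) P X k - gcnRep d W P X k)
      ≤ √n * c * (∏ i ∈ range k, (‖W i‖ + ‖ΔW i‖) - ∏ i ∈ range k, ‖W i‖)) :
    frobNorm (gcnRep d (fun i => W i + ΔW i) P X k * (W k + ΔW k) - gcnRep d W P X k * W k)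
      ≤ √n * c * (∏ i ∈ range (k + 1), (‖W i‖ + ‖ΔW i‖) - ∏ i ∈ range (k + 1), ‖W i‖) := by
  refine (frobNorm_mul_add_sub_mul_le _ _ _ _).trans ?_
  have hH := frobNorm_gcnRep_le W hP hX k
  calc _ ≤ √n * c * (∏ i ∈ range k, (‖W i‖ + ‖ΔW i‖) - ∏ i ∈ range k, ‖W i‖)
          * (‖W k‖ + ‖ΔW k‖) + √n * c * (∏ i ∈ range k, ‖W i‖) * ‖ΔW k‖ := by
        gcongr
    _ = _ := by
        rw [prod_range_succ, prod_range_succ]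
        ring

lemma frobNorm_gcnRep_sub_le (hP : ‖P‖ ≤ 1) (hX : ‖X‖ ≤ c) (k : ℕ) :
    frobNorm (gcnRep d (fun i => W i + ΔW i) P X k - gcnRep d W P X k)
      ≤ √n * c * (∏ i ∈ range k, (‖W i‖ + ‖ΔW i‖) - ∏ i ∈ range k, ‖W i‖) := by
  induction k with
  | zero => simp [gcnRep, frobNorm]
  | succ k ih =>
    calc _ ≤ frobNorm (P * gcnRep d (fun i => W i + ΔW i) P X k * (W k + ΔW k)
            - P * gcnRep d W P X k * W k) := frobNorm_relu_sub_le _ _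
      _ ≤ frobNorm (gcnRep d (fun i => W i + ΔW i) P X k * (W k + ΔW k)
            - gcnRep d W P X k * W k) := by
          rw [Matrix.mul_assoc, Matrix.mul_assoc, ← Matrix.mul_sub]
          exact frobNorm_mul_le_of_norm_le_one hP _
      _ ≤ _ := frobNorm_gcnRep_mul_sub_le W ΔW hP hX k ih

lemma abs_gcnOut_le (hn : 0 < n) (hP : ‖P‖ ≤ 1) (hX : ‖X‖ ≤ c) (l : ℕ) (j : Fin (d l)) :
    |gcnOut d W P X l j| ≤ c * ∏ i ∈ range l, ‖W i‖ := by
  cases l with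
  | zero => simpa [gcnOut] using (norm_nonneg X).trans hX
  | succ l =>
    refine abs_inv_mul_sum_le_of_frobNorm_le hn
      ((frobNorm_mul_le_frobNorm_mul_norm _ _).trans ?_) j
    rw [prod_range_succ, ← mul_assoc, ← mul_assoc]
    exact mul_le_mul_of_nonneg_right (frobNorm_gcnRep_le W hP hX l) (norm_nonneg _)

lemma abs_gcnOut_sub_le (hn : 0 < n) (hP : ‖P‖ ≤ 1) (hX : ‖X‖ ≤ c) (l : ℕ) (j : Fin (d l)) :
    |gcnOut d (fun i => W i + ΔW i) P X l j - gcnOut d W P X l j|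
      ≤ c * (∏ i ∈ range l, (‖W i‖ + ‖ΔW i‖) - ∏ i ∈ range l, ‖W i‖) := by
  cases l with
  | zero => simp [gcnOut]
  | succ l =>
    simp only [gcnOut, ← mul_sub, ← Finset.sum_sub_distrib, ← Matrix.sub_apply]
    refine abs_inv_mul_sum_le_of_frobNorm_le hn ?_ j
    rw [← mul_assoc]
    exact frobNorm_gcnRep_mul_sub_le W ΔW hP hX l (frobNorm_gcnRep_sub_le W ΔW hP hX l)

end GCN

lemma abs_csInf_image_sub_csInf_image_le {α : Type*} {s : Set α} {f g : α → ℝ} {C : ℝ}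
    (hs : s.Nonempty) (hg : BddBelow (g '' s)) (hfg : ∀ x ∈ s, |f x - g x| ≤ C) :
    |sInf (f '' s) - sInf (g '' s)| ≤ C := by
  obtain ⟨b, hb⟩ := hg
  have hf : BddBelow (f '' s) := ⟨b - C, by
    rintro _ ⟨x, hx, rfl⟩
    linarith [hb ⟨x, hx, rfl⟩, (abs_le.mp (hfg x hx)).1]⟩
  rw [abs_le]
  constructor
  · suffices sInf (g '' s) - C ≤ sInf (f '' s) by linarith
    refine le_csInf (hs.image f) ?_
    rintro _ ⟨x, hx, rfl⟩
    linarith [csInf_le ⟨b, hb⟩ ⟨x, hx, rfl⟩, (abs_le.mp (hfg x hx)).1]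
  · suffices sInf (f '' s) - C ≤ sInf (g '' s) by linarith
    refine le_csInf (hs.image g) ?_
    rintro _ ⟨x, hx, rfl⟩
    linarith [csInf_le hf ⟨x, hx, rfl⟩, (abs_le.mp (hfg x hx)).2]

lemma gcnRobustMarginPair_eq_sInf_image {n : ℕ} (l : ℕ) (d : ℕ → ℕ)
    (W : ∀ k : ℕ, Matrix (Fin (d k)) (Fin (d (k + 1))) ℝ) (ε : ℝ)
    (G : Matrix (Fin n) (Fin (d 0)) ℝ × Matrix (Fin n) (Fin n) ℝ) (i j : Fin (d l)) :
    gcnRobustMarginPair l d W ε G i j = sInf ((fun G' =>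
      gcnOut d W (gcnLap G'.2) G'.1 l i - gcnOut d W (gcnLap G'.2) G'.1 l j) '' attack ε G) :=
  rfl

lemma attack_nonempty {n h₀ : ℕ} {ε : ℝ} (hε : 0 ≤ ε)
    (G : Matrix (Fin n) (Fin h₀) ℝ × Matrix (Fin n) (Fin n) ℝ) : (attack ε G).Nonempty :=
  ⟨(G.1, 0), by simpa [attack, specNorm_eq_norm] using hε, isSymm_zero, fun _ _ => Or.inl rfl⟩

lemma norm_le_of_mem_attack {n h₀ : ℕ} {ε B : ℝ}
    {G G' : Matrix (Fin n) (Fin h₀) ℝ × Matrix (Fin n) (Fin n) ℝ}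
    (hG' : G' ∈ attack ε G) (hG : specNorm G.1 ≤ B) : ‖gcnLap G'.2‖ ≤ 1 ∧ ‖G'.1‖ ≤ B + ε := by
  obtain ⟨hdist, hsymm, h01⟩ := hG'
  refine ⟨norm_gcnLap_le_one hsymm fun i j => ?_, ?_⟩
  · rcases h01 i j with h | h <;> simp [h]
  · exact (norm_le_norm_add_norm_sub' _ _).trans (add_le_add hG hdist)

theorem gcn_robust_margin_pert_le_general (n l : ℕ) (hn : 0 < n) (d : ℕ → ℕ)
    (W ΔW : ∀ k : ℕ, Matrix (Fin (d k)) (Fin (d (k + 1))) ℝ)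
    (hΔ : ∀ k, k < l → specNorm (ΔW k) ≤ specNorm (W k) / l)
    (ε : ℝ) (hε : 0 < ε)
    (X : Matrix (Fin n) (Fin (d 0)) ℝ) (A : Matrix (Fin n) (Fin n) ℝ)
    (B : ℝ) (hX : specNorm X ≤ B) (i j : Fin (d l)) :
    |gcnRobustMarginPair l d (fun k => W k + ΔW k) ε (X, A) i j -
        gcnRobustMarginPair l d W ε (X, A) i j| ≤
      2 * Real.exp 1 * (B + ε) * (∏ k ∈ Finset.range l, specNorm (W k)) *
        (∑ k ∈ Finset.range l, specNorm (ΔW k) / specNorm (W k)) := by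
  simp only [specNorm_eq_norm] at hΔ ⊢
  set Q := ∏ k ∈ range l, ‖W k‖
  set Q' := ∏ k ∈ range l, (‖W k‖ + ‖ΔW k‖)
  rw [gcnRobustMarginPair_eq_sInf_image, gcnRobustMarginPair_eq_sInf_image]
  refine (abs_csInf_image_sub_csInf_image_le (C := 2 * ((B + ε) * (Q' - Q)))
    (attack_nonempty hε.le _) ⟨-(2 * ((B + ε) * Q)), ?_⟩ fun G' hG' => ?_).trans ?_
  · rintro _ ⟨G', hG', rfl⟩
    obtain ⟨hP, hG'X⟩ := norm_le_of_mem_attack hG' hX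
    have hi := abs_le.mp (abs_gcnOut_le W hn hP hG'X l i)
    have hj := abs_le.mp (abs_gcnOut_le W hn hP hG'X l j)
    dsimp only
    linarith [hi.1, hj.2]
  · obtain ⟨hP, hG'X⟩ := norm_le_of_mem_attack hG' hX
    rw [sub_sub_sub_comm, two_mul]
    exact (abs_sub _ _).trans (add_le_add (abs_gcnOut_sub_le W ΔW hn hP hG'X l i)
      (abs_gcnOut_sub_le W ΔW hn hP hG'X l j))
  · have hB : 0 ≤ B + ε := by linarith [(norm_nonneg X).trans hX]
    have hQ := prod_add_sub_prod_le l (w := fun k => ‖W k‖) (δ := fun k => ‖ΔW k‖)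
      (fun _ => norm_nonneg _) (fun _ => norm_nonneg _) hΔ
    calc 2 * ((B + ε) * (Q' - Q))
        ≤ 2 * ((B + ε) * (Real.exp 1 * Q * ∑ k ∈ range l, ‖ΔW k‖ / ‖W k‖)) := by gcongr
      _ = _ := by ring

/-- Perturbation bound for the robust margin operator of an `l`-layer GCN under
`ε`-attacks: if `‖ΔW_i‖₂ ≤ ‖W_i‖₂/l` for all `i` and `‖X‖₂ ≤ B`, then
`|RM(f_{w+Δw}(G); i, j) − RM(f_w(G); i, j)| ≤ 2e(B+ε)(∏‖W_i‖₂) Σ ‖ΔW_i‖₂/‖W_i‖₂`. -/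
theorem gcn_robust_margin_pert_le (n l : ℕ) (hn : 0 < n) (hl : 2 ≤ l) (d : ℕ → ℕ)
    (W ΔW : ∀ k : ℕ, Matrix (Fin (d k)) (Fin (d (k + 1))) ℝ)
    (hW : ∀ k, k < l → W k ≠ 0)
    (hΔ : ∀ k, k < l → specNorm (ΔW k) ≤ specNorm (W k) / l)
    (ε : ℝ) (hε : 0 < ε)
    (X : Matrix (Fin n) (Fin (d 0)) ℝ) (A : Matrix (Fin n) (Fin n) ℝ)
    (hsymm : A.IsSymm) (h01 : ∀ i j, A i j = 0 ∨ A i j = 1)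
    (B : ℝ) (hX : specNorm X ≤ B) (i j : Fin (d l)) :
    |gcnRobustMarginPair l d (fun k => W k + ΔW k) ε (X, A) i j -
        gcnRobustMarginPair l d W ε (X, A) i j| ≤
      2 * Real.exp 1 * (B + ε) * (∏ k ∈ Finset.range l, specNorm (W k)) *
        (∑ k ∈ Finset.range l, specNorm (ΔW k) / specNorm (W k)) :=
  gcn_robust_margin_pert_le_general n l hn d W ΔW hΔ ε hε X A B hX i j

end
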